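/- For α, β, λ > 0 and any natural number m, the m-th moment of the (1-Exp)/Exp Gamma distribution is finite, i.e., ∫_0^∞ x^m h(x) dx < ∞. -/

import Mathlib

open Real MeasureTheory Set Filter Topology

/-!
With `q = e^(-λx) / (1 - e^(-λx))` the density is a constant times `q^α (1 + q) e^(-β q)`, which
is bounded for `q ≥ 0` because it tends to `0` as `q → ∞`; this handles `x ∈ (0, 1]`. For `x ≥ 1`,
`q ≤ e^(-λx) / c` and `1 + q ≤ 1 / c` with `c = 1 - e^(-λ)`, so `x^m h(x) = O(x^m e^(-λαx))`.
-/

lemma bddAbove_image_Ici_of_tendsto_atTop {f : ℝ → ℝ} {a l : ℝ} (hf : ContinuousOn f (Ici a))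
    (hl : Tendsto f atTop (𝓝 l)) : BddAbove (f '' Ici a) := by
  obtain ⟨M, hM⟩ := (hl.eventually (gt_mem_nhds (lt_add_one l))).exists_forall_of_atTop
  obtain ⟨C, hC⟩ :=
    isCompact_Icc.bddAbove_image (hf.mono (Icc_subset_Ici_self : Icc a M ⊆ Ici a))
  refine ⟨max C (l + 1), ?_⟩
  rintro _ ⟨x, hx, rfl⟩
  rcases le_total x M with hxM | hMx
  · exact (hC ⟨x, ⟨hx, hxM⟩, rfl⟩).trans (le_max_left _ _)
  · exact (hM x hMx).le.trans (le_max_right _ _)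

lemma integrableOn_Ioi_pow_mul_exp_neg_mul (m : ℕ) {b : ℝ} (hb : 0 < b) :
    IntegrableOn (fun x ↦ x ^ m * exp (-b * x)) (Ioi 0) := by
  have h := integrableOn_rpow_mul_exp_neg_mul_rpow (s := m)
    (by linarith [m.cast_nonneg (α := ℝ)]) one_pos hb
  simpa only [rpow_natCast, rpow_one] using h

lemma div_sq_mul_div_rpow_sub_one {e : ℝ} (he : e ≠ 0) (he1 : 1 - e ≠ 0) (α : ℝ) :
    e / (1 - e) ^ 2 * (e / (1 - e)) ^ (α - 1) = (e / (1 - e)) ^ α * (1 + e / (1 - e)) := by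
  rw [rpow_sub_one (div_ne_zero he he1)]
  field_simp
  ring

/-- The odds `(1 - F x) / F x` of the exponential distribution function `F x = 1 - exp (-λ x)`. -/
noncomputable def expOdds (lam x : ℝ) : ℝ := exp (-lam * x) / (1 - exp (-lam * x))

section expOdds

variable {lam x : ℝ}

lemma one_sub_exp_neg_mul_pos (hlam : 0 < lam) (hx : 0 < x) : 0 < 1 - exp (-lam * x) :=
  sub_pos.2 (exp_lt_one_iff.2 (by nlinarith))

lemma expOdds_pos (hlam : 0 < lam) (hx : 0 < x) : 0 < expOdds lam x :=
  div_pos (exp_pos _) (one_sub_exp_neg_mul_pos hlam hx)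

lemma continuousOn_expOdds (hlam : 0 < lam) : ContinuousOn (expOdds lam) (Ioi 0) :=
  ContinuousOn.div (by fun_prop) (by fun_prop) fun _ hx ↦
    (one_sub_exp_neg_mul_pos hlam hx).ne'

lemma one_add_expOdds (hlam : 0 < lam) (hx : 0 < x) :
    1 + expOdds lam x = 1 / (1 - exp (-lam * x)) := by
  rw [expOdds, one_add_div (one_sub_exp_neg_mul_pos hlam hx).ne', sub_add_cancel]

lemma one_sub_exp_neg_pos (hlam : 0 < lam) : 0 < 1 - exp (-lam) :=
  sub_pos.2 (exp_lt_one_iff.2 (neg_lt_zero.2 hlam))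

lemma one_sub_exp_neg_le_of_one_le (hlam : 0 < lam) (hx : 1 ≤ x) :
    1 - exp (-lam) ≤ 1 - exp (-lam * x) := by
  gcongr
  nlinarith

lemma expOdds_le_of_one_le (hlam : 0 < lam) (hx : 1 ≤ x) :
    expOdds lam x ≤ exp (-lam * x) / (1 - exp (-lam)) :=
  div_le_div_of_nonneg_left (exp_pos _).le (one_sub_exp_neg_pos hlam)
    (one_sub_exp_neg_le_of_one_le hlam hx)

lemma one_add_expOdds_le_of_one_le (hlam : 0 < lam) (hx : 1 ≤ x) :
    1 + expOdds lam x ≤ 1 / (1 - exp (-lam)) := by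
  rw [one_add_expOdds hlam (one_pos.trans_le hx)]
  exact one_div_le_one_div_of_le (one_sub_exp_neg_pos hlam)
    (one_sub_exp_neg_le_of_one_le hlam hx)

end expOdds

/-- The Gamma kernel `u^(α-1) e^(-β u)` times `u (1 + u)`, which is `|du/dx| / λ` for
`u = expOdds λ x`. -/
noncomputable def gammaOddsKernel (α β u : ℝ) : ℝ := u ^ α * (1 + u) * exp (-β * u)

section gammaOddsKernel

variable {α β u : ℝ}

lemma gammaOddsKernel_nonneg (hu : 0 ≤ u) : 0 ≤ gammaOddsKernel α β u := by
  unfold gammaOddsKernel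
  positivity

lemma gammaOddsKernel_le (hβ : 0 ≤ β) (hu : 0 ≤ u) : gammaOddsKernel α β u ≤ u ^ α * (1 + u) :=
  mul_le_of_le_one_right (by positivity) (exp_le_one_iff.2 (by nlinarith))

lemma continuous_gammaOddsKernel (hα : 0 ≤ α) : Continuous (gammaOddsKernel α β) := by
  have := continuous_rpow_const hα
  unfold gammaOddsKernel
  fun_prop

lemma tendsto_gammaOddsKernel_atTop (α : ℝ) (hβ : 0 < β) :
    Tendsto (gammaOddsKernel α β) atTop (𝓝 0) := by
  have h := (tendsto_rpow_mul_exp_neg_mul_atTop_nhds_zero α β hβ).add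
    (tendsto_rpow_mul_exp_neg_mul_atTop_nhds_zero (α + 1) β hβ)
  rw [add_zero] at h
  refine h.congr' ?_
  filter_upwards [eventually_gt_atTop 0] with u hu
  rw [gammaOddsKernel, rpow_add_one hu.ne']
  ring

lemma bddAbove_gammaOddsKernel (hα : 0 ≤ α) (hβ : 0 < β) :
    BddAbove (gammaOddsKernel α β '' Ici 0) :=
  bddAbove_image_Ici_of_tendsto_atTop (continuous_gammaOddsKernel hα).continuousOn
    (tendsto_gammaOddsKernel_atTop α hβ)

end gammaOddsKernel

section moments

variable {α β lam : ℝ} (m : ℕ)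

lemma continuousOn_pow_mul_gammaOddsKernel_expOdds (hα : 0 ≤ α) (hlam : 0 < lam) :
    ContinuousOn (fun x ↦ x ^ m * gammaOddsKernel α β (expOdds lam x)) (Ioi 0) :=
  (continuous_pow m).continuousOn.mul
    ((continuous_gammaOddsKernel hα).comp_continuousOn (continuousOn_expOdds hlam))

lemma integrableOn_Ioc_pow_mul_gammaOddsKernel_expOdds (hα : 0 ≤ α) (hβ : 0 < β)
    (hlam : 0 < lam) :
    IntegrableOn (fun x ↦ x ^ m * gammaOddsKernel α β (expOdds lam x)) (Ioc 0 1) := by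
  obtain ⟨C, hC⟩ := bddAbove_gammaOddsKernel hα hβ
  refine .of_bound measure_Ioc_lt_top (((continuousOn_pow_mul_gammaOddsKernel_expOdds m hα
    hlam).mono Ioc_subset_Ioi_self).aestronglyMeasurable measurableSet_Ioc) C ?_
  filter_upwards [ae_restrict_mem measurableSet_Ioc] with x ⟨hx0, hx1⟩
  have hq := (expOdds_pos hlam hx0).le
  have hk := gammaOddsKernel_nonneg (α := α) (β := β) hq
  rw [norm_of_nonneg (by positivity)]
  calc x ^ m * gammaOddsKernel α β (expOdds lam x) ≤ 1 * C :=
        mul_le_mul (pow_le_one₀ hx0.le hx1) (hC ⟨_, hq, rfl⟩) hk zero_le_one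
    _ = C := one_mul C

lemma integrableOn_Ioi_pow_mul_gammaOddsKernel_expOdds (hα : 0 < α) (hβ : 0 < β)
    (hlam : 0 < lam) :
    IntegrableOn (fun x ↦ x ^ m * gammaOddsKernel α β (expOdds lam x)) (Ioi 1) := by
  set c := 1 - exp (-lam)
  have hc : 0 < c := one_sub_exp_neg_pos hlam
  have hdom : IntegrableOn (fun x ↦ (c ^ α)⁻¹ * c⁻¹ * (x ^ m * exp (-(lam * α) * x))) (Ioi 1) :=
    ((integrableOn_Ioi_pow_mul_exp_neg_mul m (mul_pos hlam hα)).mono_set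
      (Ioi_subset_Ioi zero_le_one)).const_mul _
  refine hdom.mono' (((continuousOn_pow_mul_gammaOddsKernel_expOdds m hα.le
    hlam).mono (Ioi_subset_Ioi zero_le_one)).aestronglyMeasurable measurableSet_Ioi) ?_
  filter_upwards [ae_restrict_mem measurableSet_Ioi] with x hx
  have hx1 : 1 ≤ x := hx.le
  have hx0 : 0 < x := one_pos.trans hx
  have hq := (expOdds_pos hlam hx0).le
  have hpow : expOdds lam x ^ α ≤ (c ^ α)⁻¹ * exp (-(lam * α) * x) := by
    calc expOdds lam x ^ α ≤ (exp (-lam * x) / c) ^ α :=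
          rpow_le_rpow hq (expOdds_le_of_one_le hlam hx1) hα.le
      _ = (c ^ α)⁻¹ * exp (-(lam * α) * x) := by
          rw [div_rpow (exp_pos _).le hc.le, ← exp_mul]
          ring_nf
  rw [norm_of_nonneg (mul_nonneg (by positivity) (gammaOddsKernel_nonneg hq))]
  calc x ^ m * gammaOddsKernel α β (expOdds lam x)
      ≤ x ^ m * (((c ^ α)⁻¹ * exp (-(lam * α) * x)) * c⁻¹) := by
        gcongr
        refine (gammaOddsKernel_le hβ.le hq).trans (mul_le_mul hpow ?_ (by positivity)
          (by positivity))
        simpa using one_add_expOdds_le_of_one_le hlam hx1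
    _ = (c ^ α)⁻¹ * c⁻¹ * (x ^ m * exp (-(lam * α) * x)) := by ring

lemma integrableOn_pow_mul_gammaOddsKernel_expOdds (hα : 0 < α) (hβ : 0 < β) (hlam : 0 < lam) :
    IntegrableOn (fun x ↦ x ^ m * gammaOddsKernel α β (expOdds lam x)) (Ioi 0) := by
  rw [← Ioc_union_Ioi_eq_Ioi zero_le_one]
  exact (integrableOn_Ioc_pow_mul_gammaOddsKernel_expOdds m hα.le hβ hlam).union
    (integrableOn_Ioi_pow_mul_gammaOddsKernel_expOdds m hα hβ hlam)

end moments

/-- Every moment of the (1-Exp)/Exp Gamma distribution is finite. -/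
theorem stmt_9 (α β lam : ℝ) (m : ℕ) (hα : 0 < α) (hβ : 0 < β)
    (hlam : 0 < lam) :
    IntegrableOn (fun x : ℝ => x ^ m *
      (lam * β ^ α / Real.Gamma α *
        (Real.exp (-lam * x) / (1 - Real.exp (-lam * x)) ^ 2) *
        (Real.exp (-lam * x) / (1 - Real.exp (-lam * x))) ^ (α - 1) *
        Real.exp (-β * (Real.exp (-lam * x) / (1 - Real.exp (-lam * x))))))
      (Ioi 0) := by
  refine IntegrableOn.congr_fun ((integrableOn_pow_mul_gammaOddsKernel_expOdds m hα hβ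
    hlam).const_mul (lam * β ^ α / Gamma α)) (fun x hx ↦ ?_) measurableSet_Ioi
  rw [gammaOddsKernel, expOdds, ← div_sq_mul_div_rpow_sub_one (exp_pos _).ne'
    (one_sub_exp_neg_mul_pos hlam hx).ne']
  ring
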